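/- arXiv:2512.13615 — 9 statements merged into one kernel-verified Lean document; each statement's English description precedes it below -/
import Mathlib

section
/- Theorem 1 (hyper-minrank characterizes the optimal linear multi-sender broadcast length). Assume every message is stored at some sender, i.e. for every k ∈ Fin K there exists n ∈ Fin N with k ∈ 𝓜 n. Then the minimum length ℓ over all linear multi-sender index codes for the instance exists, the minimum of ∑_{n} rank_{𝔽₂}(A n) over all fitting tuples A exists, and the two minima are equal: the optimal linear broadcast length equals the hyper-minrank of the instance. -/
/-! Receiver `k` decodes iff the span of all transmissions contains a vector `w` that agrees with
`e_k` outside its side information `R k`. Writing `w = ∑ₙ wₙ` with `wₙ` in the span of sender `n`'s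
transmissions and taking these `wₙ` (one for each receiver) as the rows of `A n` gives a fitting
tuple with `rank (A n) ≤ |Sₙ|`. Conversely, a row basis of each `A n` is a code of length
`∑ₙ rank (A n)`, decoded by the row sums `∑ₙ A n k`. So each of the two sets of lengths dominates
the other and they share their minimum, which exists because sending every stored message uncoded
is a code. -/

open Finset

/-- A tuple of matrices `A` (one per sender) *fits* the multi-sender index
coding instance given by storage sets `M` and side-information sets `R`. -/
def Fits (K N : ℕ) (M : Fin N → Finset (Fin K)) (R : Fin K → Finset (Fin K))
    (A : Fin N → Matrix (Fin K) (Fin K) (ZMod 2)) : Prop :=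
  (∀ n k k', A n k k' = 1 → k' ∈ M n) ∧
  (∀ k, ∑ n, A n k k = 1) ∧
  (∀ k k', k' ≠ k → k' ∉ R k → ∑ n, A n k k' = 0)

/-- A family of finite sets of transmission vectors `S n` (one per sender)
is a linear multi-sender index code for the instance. -/
def IsLinearCode (K N : ℕ) (M : Fin N → Finset (Fin K)) (R : Fin K → Finset (Fin K))
    (S : Fin N → Finset (Fin K → ZMod 2)) : Prop :=
  (∀ n, ∀ u ∈ S n, ∀ m, u m ≠ 0 → m ∈ M n) ∧
  (∀ k, (Pi.single k 1 : Fin K → ZMod 2) ∈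
    Submodule.span (ZMod 2)
      ((⋃ n, (S n : Set (Fin K → ZMod 2))) ∪ {v | ∃ j ∈ R k, v = Pi.single j 1}))

open Submodule Module

theorem IsLeast.of_forall_exists_le {α : Type*} [PartialOrder α] {s t : Set α} {a : α}
    (ht : IsLeast t a) (hst : ∀ x ∈ s, ∃ y ∈ t, y ≤ x) (hts : ∀ y ∈ t, ∃ x ∈ s, x ≤ y) :
    IsLeast s a := by
  have lower : a ∈ lowerBounds s := fun x hx => by
    obtain ⟨y, hy, hyx⟩ := hst x hx
    exact (ht.2 hy).trans hyx
  obtain ⟨x, hx, hxa⟩ := hts a ht.1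
  exact ⟨le_antisymm hxa (lower hx) ▸ hx, lower⟩

section PiSingle

variable {R ι : Type*} [Fintype ι] [DecidableEq ι]

theorem Pi.mem_span_single_image_iff [Semiring R] {T : Set ι} {v : ι → R} :
    v ∈ span R ((fun j => (Pi.single j 1 : ι → R)) '' T) ↔ ∀ i ∉ T, v i = 0 := by
  constructor
  · intro hv
    have hle : span R ((fun j => (Pi.single j 1 : ι → R)) '' T) ≤
        Submodule.pi Tᶜ fun _ => ⊥ := by
      refine span_le.mpr ?_
      rintro _ ⟨j, hj, rfl⟩ i hi
      exact Pi.single_eq_of_ne (ne_of_mem_of_not_mem hj hi).symm _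
    simpa using mem_pi.mp (hle hv)
  · intro hv
    rw [pi_eq_sum_univ' v]
    refine sum_mem fun i _ => ?_
    by_cases hi : i ∈ T
    · exact smul_mem _ _ (subset_span ⟨i, hi, rfl⟩)
    · rw [hv i hi, zero_smul]
      exact zero_mem _

theorem Pi.apply_eq_zero_of_mem_span [Semiring R] {s : Set (ι → R)} {T : Set ι}
    (hs : ∀ u ∈ s, ∀ i ∉ T, u i = 0) {v : ι → R} (hv : v ∈ span R s) : ∀ i ∉ T, v i = 0 :=
  Pi.mem_span_single_image_iff.mp
    (span_le.mpr (fun u hu => Pi.mem_span_single_image_iff.mpr (hs u hu)) hv)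

theorem Pi.mem_sup_span_single_image_iff [Ring R] {V : Submodule R (ι → R)} {T : Set ι}
    {v : ι → R} :
    v ∈ V ⊔ span R ((fun j => (Pi.single j 1 : ι → R)) '' T) ↔ ∃ w ∈ V, ∀ i ∉ T, w i = v i := by
  simp only [Submodule.mem_sup, Pi.mem_span_single_image_iff]
  constructor
  · rintro ⟨w, hw, z, hz, rfl⟩
    exact ⟨w, hw, fun i hi => by simp [hz i hi]⟩
  · rintro ⟨w, hw, h⟩
    exact ⟨w, hw, v - w, fun i hi => by simp [h i hi], add_sub_cancel w v⟩

end PiSingle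

theorem Matrix.rank_le_card_of_forall_row_mem_span {F m n : Type*} [Field F] [Fintype m]
    [Fintype n] (A : Matrix m n F) (s : Finset (n → F))
    (h : ∀ i, A i ∈ span F (s : Set (n → F))) : A.rank ≤ s.card :=
  calc A.rank = finrank F (span F (Set.range A)) := A.rank_eq_finrank_span_row
    _ ≤ finrank F (span F (s : Set (n → F))) :=
      Submodule.finrank_mono (span_le.mpr (Set.range_subset_iff.mpr h))
    _ ≤ s.card := finrank_span_finset_le_card s

section IndexCoding

variable {K N : ℕ} {M : Fin N → Finset (Fin K)} {R : Fin K → Finset (Fin K)}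

theorem isLinearCode_iff {S : Fin N → Finset (Fin K → ZMod 2)} :
    IsLinearCode K N M R S ↔ (∀ n, ∀ u ∈ S n, ∀ m, u m ≠ 0 → m ∈ M n) ∧
      ∀ k, ∃ w ∈ ⨆ n, span (ZMod 2) (S n : Set (Fin K → ZMod 2)),
        ∀ j ∉ R k, w j = (Pi.single k 1 : Fin K → ZMod 2) j := by
  have hside : ∀ k, {v : Fin K → ZMod 2 | ∃ j ∈ R k, v = Pi.single j 1} =
      (fun j => (Pi.single j 1 : Fin K → ZMod 2)) '' (R k : Set (Fin K)) := by
    intro k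
    ext v
    simp [eq_comm]
  simp only [IsLinearCode, span_union, span_iUnion, hside, Pi.mem_sup_span_single_image_iff,
    Finset.mem_coe]

theorem isLinearCode_image_single (hcov : ∀ k, ∃ n, k ∈ M n) :
    IsLinearCode K N M R fun n => (M n).image fun m => Pi.single m 1 := by
  refine ⟨?_, fun k => subset_span (Or.inl ?_)⟩
  · simp only [Finset.mem_image]
    rintro n _ ⟨m', hm', rfl⟩ m hm
    obtain rfl : m = m' := by_contra fun h => hm (Pi.single_eq_of_ne h 1)
    exact hm'
  · obtain ⟨n, hn⟩ := hcov k
    exact Set.mem_iUnion.mpr ⟨n, by simpa using ⟨k, hn, rfl⟩⟩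

theorem exists_fits_of_isLinearCode (hR : ∀ k, k ∉ R k) {S : Fin N → Finset (Fin K → ZMod 2)}
    (hS : IsLinearCode K N M R S) :
    ∃ A, Fits K N M R A ∧ ∑ n, (A n).rank ≤ ∑ n, (S n).card := by
  obtain ⟨hsupp, hdec⟩ := isLinearCode_iff.mp hS
  choose w hw hwk using hdec
  choose f hf hfw using fun k => (mem_iSup_iff_exists_finsupp _ _).mp (hw k)
  have hrow : ∀ k j, ∑ n, f k n j = w k j := fun k j => by
    rw [← hfw k, Finsupp.sum_fintype _ _ fun _ => rfl, Finset.sum_apply]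
  refine ⟨fun n => Matrix.of fun k => f k n, ⟨?_, fun k => ?_, fun k j hjk hj => ?_⟩, ?_⟩
  · intro n k m hm
    have hSn : ∀ u ∈ (S n : Set (Fin K → ZMod 2)), ∀ i ∉ (M n : Set (Fin K)), u i = 0 :=
      fun u hu i hi => by_contra fun h => hi (hsupp n u hu i h)
    by_contra hmM
    exact zero_ne_one ((Pi.apply_eq_zero_of_mem_span hSn (hf k n) m hmM).symm.trans hm)
  · simp only [Matrix.of_apply, hrow, hwk k k (hR k), Pi.single_eq_same]
  · simp only [Matrix.of_apply, hrow, hwk k j hj, Pi.single_eq_of_ne hjk]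
  · exact sum_le_sum fun n _ =>
      Matrix.rank_le_card_of_forall_row_mem_span _ _ fun k => hf k n

theorem exists_isLinearCode_of_fits {A : Fin N → Matrix (Fin K) (Fin K) (ZMod 2)}
    (hA : Fits K N M R A) :
    ∃ S, IsLinearCode K N M R S ∧ ∑ n, (S n).card ≤ ∑ n, (A n).rank := by
  obtain ⟨hsupp, hdiag, hoff⟩ := hA
  choose S hSrows hScard hSspan using
    fun n => exists_finset_span_eq_linearIndepOn (ZMod 2) (Set.range (A n))
  refine ⟨S, isLinearCode_iff.mpr ⟨?_, fun k => ⟨∑ n, A n k, ?_, fun j hj => ?_⟩⟩, ?_⟩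
  · intro n u hu m hm
    obtain ⟨k, rfl⟩ := hSrows n hu
    exact hsupp n k m (Fin.eq_one_of_ne_zero _ hm)
  · exact sum_mem fun n _ => mem_iSup_of_mem n ((hSspan n).1 ▸ subset_span ⟨k, rfl⟩)
  · rw [Finset.sum_apply]
    by_cases hjk : j = k
    · rw [hjk, hdiag, Pi.single_eq_same]
    · rw [hoff k j hjk hj, Pi.single_eq_of_ne hjk]
  · exact (sum_congr rfl fun n _ => (hScard n).trans (A n).rank_eq_finrank_span_row.symm).le

end IndexCoding

/-- Theorem 1: the optimal linear multi-sender broadcast length exists and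
equals the hyper-minrank of the instance. -/
theorem hyperminrank_eq_optimal_linear_length
    (K N : ℕ) (M : Fin N → Finset (Fin K)) (R : Fin K → Finset (Fin K))
    (hR : ∀ k, k ∉ R k)
    (hcov : ∀ k : Fin K, ∃ n : Fin N, k ∈ M n) :
    ∃ ℓ : ℕ,
      IsLeast {l : ℕ | ∃ S : Fin N → Finset (Fin K → ZMod 2),
        IsLinearCode K N M R S ∧ ∑ n, (S n).card = l} ℓ ∧
      IsLeast {r : ℕ | ∃ A : Fin N → Matrix (Fin K) (Fin K) (ZMod 2),
        Fits K N M R A ∧ ∑ n, (A n).rank = r} ℓ := by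
  have hcodes : {l : ℕ | ∃ S : Fin N → Finset (Fin K → ZMod 2),
      IsLinearCode K N M R S ∧ ∑ n, (S n).card = l}.Nonempty :=
    ⟨_, _, isLinearCode_image_single hcov, rfl⟩
  refine ⟨_, isLeast_csInf hcodes, (isLeast_csInf hcodes).of_forall_exists_le ?_ ?_⟩
  · rintro _ ⟨A, hA, rfl⟩
    obtain ⟨S, hS, hle⟩ := exists_isLinearCode_of_fits hA
    exact ⟨_, ⟨S, hS, rfl⟩, hle⟩
  · rintro _ ⟨S, hS, rfl⟩
    obtain ⟨A, hA, hle⟩ := exists_fits_of_isLinearCode hR hS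
    exact ⟨_, ⟨A, hA, rfl⟩, hle⟩
end

section
/- Achievability half of Theorem 1: for every fitting tuple A there exists a linear multi-sender index code of length ∑_{n} rank_{𝔽₂}(A n). Concretely, for each sender n one may take S_n to be a set of rank_{𝔽₂}(A n) rows of the matrix A n spanning its row space, and then for every receiver k the standard basis vector e_k lies in the 𝔽₂-linear span of (⋃_n S_n) ∪ {e_j : j ∈ 𝓡 k}. -/
/-! Sender `n` transmits a basis of the row space of `A n` chosen among its rows, so every
row of every `A n` is decodable, hence so is `v = ∑ n, A n k`. Receiver `k` then recovers `e_k`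
from `v`: the parity conditions on `A` say exactly that `v - e_k` vanishes outside `𝓡 k`, so
`v - e_k` is a combination of the side information `e_j`, `j ∈ 𝓡 k`. -/

open Finset

open Submodule

theorem Matrix.exists_finset_subset_range_span_eq_card_eq_rank {m n F : Type*} [Fintype m]
    [Fintype n] [Field F] (A : Matrix m n F) :
    ∃ S : Finset (n → F), (S : Set (n → F)) ⊆ Set.range A ∧
      span F (S : Set (n → F)) = span F (Set.range A) ∧ S.card = A.rank := by
  obtain ⟨b, hbA, hspan, hli⟩ := exists_linearIndependent F (Set.range A)
  have hfin : b.Finite := (Set.finite_range A).subset hbA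
  refine ⟨hfin.toFinset, by simpa using hbA, by simpa using hspan, ?_⟩
  rw [← finrank_span_finset_eq_card (by rw [hfin.coe_toFinset]; exact hli),
    Matrix.rank_eq_finrank_span_row, hfin.coe_toFinset, hspan]
  rfl

theorem mem_span_single_of_eq_zero_of_notMem {ι R : Type*} [Fintype ι] [DecidableEq ι]
    [Semiring R] {s : Finset ι} {w : ι → R} (hw : ∀ i ∉ s, w i = 0) :
    w ∈ span R {v | ∃ j ∈ s, v = Pi.single j 1} := by
  rw [← Finset.univ_sum_single w]
  refine sum_mem fun i _ => ?_
  by_cases hi : i ∈ s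
  · rw [show Pi.single i (w i) = w i • Pi.single i (1 : R) by
      rw [← Pi.single_smul', smul_eq_mul, mul_one]]
    exact smul_mem _ _ (subset_span ⟨i, hi, rfl⟩)
  · simp [hw i hi]

theorem single_mem_span_union_of_sub_eq_zero_of_notMem {ι R : Type*} [Fintype ι]
    [DecidableEq ι] [Ring R] {T : Set (ι → R)} {s : Finset ι} {v : ι → R} {k : ι}
    (hv : v ∈ span R T) (hvk : ∀ i ∉ s, (v - Pi.single k 1 : ι → R) i = 0) :
    Pi.single k 1 ∈ span R (T ∪ {v | ∃ j ∈ s, v = Pi.single j 1}) := by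
  rw [show (Pi.single k 1 : ι → R) = v - (v - Pi.single k 1) by abel, span_union]
  exact sub_mem (mem_sup_left hv) (mem_sup_right (mem_span_single_of_eq_zero_of_notMem hvk))

theorem Fits.sum_rows_sub_single_eq_zero {K N : ℕ} {M : Fin N → Finset (Fin K)}
    {R : Fin K → Finset (Fin K)} {A : Fin N → Matrix (Fin K) (Fin K) (ZMod 2)}
    (hA : Fits K N M R A) (k : Fin K) :
    ∀ k' ∉ R k, (∑ n, A n k - Pi.single k 1 : Fin K → ZMod 2) k' = 0 := by
  intro k' hk'
  by_cases hkk' : k' = k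
  · subst hkk'
    simp [Finset.sum_apply, hA.2.1 k']
  · simp [Finset.sum_apply, hA.2.2 k k' hkk' hk', Pi.single_eq_of_ne hkk']

theorem achievability_general
    (K N : ℕ) (M : Fin N → Finset (Fin K)) (R : Fin K → Finset (Fin K))
    (A : Fin N → Matrix (Fin K) (Fin K) (ZMod 2))
    (hA : Fits K N M R A) :
    ∃ S : Fin N → Finset (Fin K → ZMod 2),
      (∀ n, ∀ u ∈ S n, ∃ k : Fin K, u = A n k) ∧
      (∀ n, (S n).card = (A n).rank) ∧
      (∀ n, Submodule.span (ZMod 2) ((S n : Set (Fin K → ZMod 2))) =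
        Submodule.span (ZMod 2) (Set.range (A n))) ∧
      IsLinearCode K N M R S ∧
      ∑ n, (S n).card = ∑ n, (A n).rank := by
  choose S hSrows hSspan hScard using
    fun n => (A n).exists_finset_subset_range_span_eq_card_eq_rank
  have hrows : ∀ n, ∀ u ∈ S n, ∃ k, u = A n k :=
    fun n u hu => (hSrows n hu).imp fun _ => Eq.symm
  refine ⟨S, hrows, hScard, hSspan, ⟨?_, fun k => ?_⟩, sum_congr rfl fun n _ => hScard n⟩
  · intro n u hu m hm
    obtain ⟨k, rfl⟩ := hrows n u hu
    exact hA.1 n k m (Fin.eq_one_of_ne_zero _ hm)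
  · have hsum : ∑ n, A n k ∈ span (ZMod 2) (⋃ n, (S n : Set (Fin K → ZMod 2))) :=
      Submodule.sum_mem _ fun n _ => by
        refine span_mono (Set.subset_iUnion (fun n => (S n : Set (Fin K → ZMod 2))) n) ?_
        rw [hSspan n]
        exact subset_span (Set.mem_range_self k)
    exact single_mem_span_union_of_sub_eq_zero_of_notMem hsum (hA.sum_rows_sub_single_eq_zero k)

/-- Achievability half of Theorem 1: every fitting tuple `A` yields a linear
multi-sender index code of length `∑ n, rank (A n)`, obtained by letting each
sender `n` transmit a spanning set of `rank (A n)` rows of `A n`. -/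
theorem achievability
    (K N : ℕ) (M : Fin N → Finset (Fin K)) (R : Fin K → Finset (Fin K))
    (hR : ∀ k, k ∉ R k)
    (A : Fin N → Matrix (Fin K) (Fin K) (ZMod 2))
    (hA : Fits K N M R A) :
    ∃ S : Fin N → Finset (Fin K → ZMod 2),
      (∀ n, ∀ u ∈ S n, ∃ k : Fin K, u = A n k) ∧
      (∀ n, (S n).card = (A n).rank) ∧
      (∀ n, Submodule.span (ZMod 2) ((S n : Set (Fin K → ZMod 2))) =
        Submodule.span (ZMod 2) (Set.range (A n))) ∧
      IsLinearCode K N M R S ∧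
      ∑ n, (S n).card = ∑ n, (A n).rank :=
  achievability_general K N M R A hA
end

section
/- Converse half of Theorem 1: for every linear multi-sender index code (S_n)_{n ∈ Fin N} for the instance, there exists a fitting tuple A : Fin N → Matrix (Fin K) (Fin K) (ZMod 2) with ∑_{n} rank_{𝔽₂}(A n) ≤ ∑_{n} |S_n|. Consequently, the hyper-minrank of the instance is a lower bound on the length of every linear multi-sender index code. -/
open Finset

/-!
Write each `e_k` as a combination of code vectors plus side-information vectors `e_j`,
`j ∈ R k`. Hand every code vector to exactly one sender that stores it (a disjoint family
`T n ⊆ S n`), and let row `k` of `A n` be the part of the combination of `e_k` carried by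
`T n`. Then `A n` factors through the `|T n|` vectors of `T n`, so its rank is at most `|S n|`;
its support lies in `M n`; and `∑ n, A n` agrees with `e_k` outside `R k`, which is demand
and coupled parity.
-/

theorem Finset.exists_pairwiseDisjoint_subset_biUnion_eq {ι α : Type*} [Fintype ι]
    [DecidableEq α] (S : ι → Finset α) :
    ∃ T : ι → Finset α, (∀ n, T n ⊆ S n) ∧ (Set.univ : Set ι).PairwiseDisjoint T ∧
      univ.biUnion T = univ.biUnion S := by
  obtain ⟨T, hTS, hsup, hdisj⟩ := Fintype.exists_disjointed_le S
  refine ⟨T, hTS, fun i _ j _ hij => hdisj hij, ?_⟩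
  simpa only [sup_eq_biUnion] using hsup

theorem Submodule.exists_sum_mul_eq_of_mem_span_union_single {R ι : Type*} [CommSemiring R]
    [DecidableEq ι] {F : Finset (ι → R)} {s : Finset ι} {x : ι → R}
    (hx : x ∈ span R (↑F ∪ {v | ∃ j ∈ s, v = Pi.single j 1})) :
    ∃ c : (ι → R) → R, ∀ i ∉ s, ∑ v ∈ F, c v * v i = x i := by
  rw [span_union, mem_sup] at hx
  obtain ⟨y, hy, z, hz, rfl⟩ := hx
  obtain ⟨c, -, rfl⟩ := mem_span_finset.1 hy
  refine ⟨c, fun i hi => ?_⟩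
  have hzi : z ∈ LinearMap.ker (LinearMap.proj i : (ι → R) →ₗ[R] R) := by
    refine span_le.2 ?_ hz
    rintro _ ⟨j, hj, rfl⟩
    simp [show i ≠ j by rintro rfl; exact hi hj]
  rw [LinearMap.mem_ker, LinearMap.proj_apply] at hzi
  simp [Finset.sum_apply, hzi]

section CombinationMatrix

variable {R κ ι : Type*} [CommSemiring R]

def combinationMatrix (c : κ → (ι → R) → R) (T : Finset (ι → R)) : Matrix κ ι R :=
  Matrix.of fun k i => ∑ v ∈ T, c k v * v i

theorem rank_combinationMatrix_le [StrongRankCondition R] [Fintype ι] (c : κ → (ι → R) → R)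
    (T : Finset (ι → R)) :
    (combinationMatrix c T).rank ≤ T.card := by
  have hfactor : combinationMatrix c T =
      Matrix.of (fun k (v : T) => c k v) * Matrix.of fun (v : T) i => (v : ι → R) i := by
    ext k i
    simp only [combinationMatrix, Matrix.of_apply, Matrix.mul_apply]
    exact (sum_coe_sort T fun v => c k v * v i).symm
  calc (combinationMatrix c T).rank
      ≤ (Matrix.of fun (v : T) i => (v : ι → R) i).rank :=
        hfactor ▸ Matrix.rank_mul_le_right _ _
    _ ≤ Fintype.card T := Matrix.rank_le_card_height _
    _ = T.card := Fintype.card_coe T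

theorem exists_ne_zero_of_combinationMatrix_ne_zero {c : κ → (ι → R) → R}
    {T : Finset (ι → R)} {k : κ} {i : ι} (h : combinationMatrix c T k i ≠ 0) :
    ∃ v ∈ T, v i ≠ 0 := by
  obtain ⟨v, hv, hcv⟩ := exists_ne_zero_of_sum_ne_zero h
  exact ⟨v, hv, right_ne_zero_of_mul hcv⟩

theorem sum_combinationMatrix_apply {σ : Type*} [DecidableEq (ι → R)] [Fintype σ]
    (c : κ → (ι → R) → R) {T : σ → Finset (ι → R)}
    (hT : (Set.univ : Set σ).PairwiseDisjoint T) (k : κ) (i : ι) :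
    ∑ n, combinationMatrix c (T n) k i = combinationMatrix c (univ.biUnion T) k i := by
  simp only [combinationMatrix, Matrix.of_apply]
  exact (sum_biUnion (by simpa using hT)).symm

end CombinationMatrix

theorem fits_of_sum_apply_eq_single {K N : ℕ} {M : Fin N → Finset (Fin K)}
    {R : Fin K → Finset (Fin K)} (hR : ∀ k, k ∉ R k)
    {A : Fin N → Matrix (Fin K) (Fin K) (ZMod 2)}
    (hsupp : ∀ n k k', A n k k' ≠ 0 → k' ∈ M n)
    (hsum : ∀ k k', k' ∉ R k → ∑ n, A n k k' = (Pi.single k 1 : Fin K → ZMod 2) k') :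
    Fits K N M R A := by
  refine ⟨fun n k k' h => hsupp n k k' (h ▸ one_ne_zero), fun k => ?_, fun k k' hne hk' => ?_⟩
  · simpa using hsum k k (hR k)
  · simpa [Pi.single_apply, hne] using hsum k k' hk'

/-- Converse half of Theorem 1: every linear multi-sender index code induces a
fitting tuple of no larger total rank; hence the hyper-minrank lower-bounds the
length of every linear multi-sender index code. -/
theorem converse
    (K N : ℕ) (M : Fin N → Finset (Fin K)) (R : Fin K → Finset (Fin K))
    (hR : ∀ k, k ∉ R k)
    (S : Fin N → Finset (Fin K → ZMod 2))
    (hS : IsLinearCode K N M R S) :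
    (∃ A : Fin N → Matrix (Fin K) (Fin K) (ZMod 2),
      Fits K N M R A ∧ ∑ n, (A n).rank ≤ ∑ n, (S n).card) ∧
    sInf {r : ℕ | ∃ A : Fin N → Matrix (Fin K) (Fin K) (ZMod 2),
        Fits K N M R A ∧ ∑ n, (A n).rank = r} ≤ ∑ n, (S n).card := by
  obtain ⟨hsupp, hspan⟩ := hS
  obtain ⟨T, hTS, hTdisj, hTunion⟩ := exists_pairwiseDisjoint_subset_biUnion_eq S
  choose c hc using fun k => Submodule.exists_sum_mul_eq_of_mem_span_union_single
    (F := univ.biUnion S) (s := R k) (by simpa using hspan k)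
  let A n := combinationMatrix c (T n)
  have hfits : Fits K N M R A := by
    refine fits_of_sum_apply_eq_single hR (fun n k k' h => ?_) (fun k k' hk' => ?_)
    · obtain ⟨v, hv, hvk'⟩ := exists_ne_zero_of_combinationMatrix_ne_zero h
      exact hsupp n v (hTS n hv) k' hvk'
    · rw [sum_combinationMatrix_apply c hTdisj, hTunion]
      exact hc k k' hk'
  have hrank : ∑ n, (A n).rank ≤ ∑ n, (S n).card :=
    sum_le_sum fun n _ => (rank_combinationMatrix_le c (T n)).trans (card_le_card (hTS n))
  exact ⟨⟨A, hfits, hrank⟩, le_trans (Nat.sInf_le ⟨A, hfits, rfl⟩) hrank⟩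
end

section
/- Lemma 2 (decodability implies span membership): let k ∈ Fin K, let 𝓡 k ⊆ Fin K be a finite set with k ∉ 𝓡 k, and let u_1,…,u_ℓ : Fin K → ZMod 2 be arbitrary vectors. Suppose there exists a (possibly nonlinear) decoding function D : (Fin ℓ → ZMod 2) → ((𝓡 k) → ZMod 2) → ZMod 2 such that for every x : Fin K → ZMod 2 one has D (fun i => ∑_{m ∈ Fin K} (u_i m) · (x m)) (fun j => x j) = x k. Then the standard basis vector e_k lies in the 𝔽₂-linear span of {u_1,…,u_ℓ} ∪ {e_j : j ∈ 𝓡 k}. -/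
open Finset

/-!
If `e k` were outside the span, a linear functional `x ↦ x ⬝ᵥ y` would vanish on every `u i` and
every side-information vector `e j` but not on `e k`. Then `y` and `0` produce the same
transmissions and the same side information, so the decoder returns the same value on both,
whereas `y k ≠ 0 = 0 k`.
-/

theorem Submodule.mem_span_of_forall_dotProduct_eq_zero {F ι : Type*} [Field F] [Fintype ι]
    {S : Set (ι → F)} {w : ι → F} (h : ∀ y, (∀ v ∈ S, v ⬝ᵥ y = 0) → w ⬝ᵥ y = 0) :
    w ∈ span F S := by
  classical
  rw [← Subspace.forall_mem_dualAnnihilator_apply_eq_zero_iff]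
  intro φ hφ
  obtain ⟨y, rfl⟩ := (dotProductEquiv F ι).surjective φ
  rw [mem_dualAnnihilator] at hφ
  have hy : ∀ v ∈ S, v ⬝ᵥ y = 0 := fun v hv => by
    rw [dotProduct_comm]
    exact hφ v (subset_span hv)
  simpa [dotProduct_comm] using h y hy

theorem decodable_implies_span_general
    (K ℓ : ℕ) (k : Fin K) (Rk : Finset (Fin K))
    (u : Fin ℓ → (Fin K → ZMod 2))
    (D : (Fin ℓ → ZMod 2) → ({j : Fin K // j ∈ Rk} → ZMod 2) → ZMod 2)
    (hD : ∀ x : Fin K → ZMod 2,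
      D (fun i => ∑ m : Fin K, u i m * x m) (fun j => x j.1) = x k) :
    (Pi.single k 1 : Fin K → ZMod 2) ∈
      Submodule.span (ZMod 2)
        (Set.range u ∪ {v | ∃ j ∈ Rk, v = (Pi.single j 1 : Fin K → ZMod 2)}) := by
  refine Submodule.mem_span_of_forall_dotProduct_eq_zero fun y hy => ?_
  have htrans : ∀ i, u i ⬝ᵥ y = 0 := fun i => hy _ (Or.inl ⟨i, rfl⟩)
  have hside : ∀ j : {j // j ∈ Rk}, y j = 0 := fun j => by
    simpa using hy _ (Or.inr ⟨j, j.2, rfl⟩)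
  calc Pi.single k 1 ⬝ᵥ y = D (fun i => u i ⬝ᵥ y) (fun j => y j) := by
        rw [single_one_dotProduct]; exact (hD y).symm
    _ = D (fun i => u i ⬝ᵥ 0) (fun j => (0 : Fin K → ZMod 2) j) := by
        simp only [htrans, hside, dotProduct_zero, Pi.zero_apply]
    _ = 0 := hD 0

/-- Lemma 2 (decodability implies span membership): if receiver `k` can recover
`x k` from the `ℓ` transmitted linear combinations `u i ⬝ x` and its side
information `(x j)_{j ∈ Rk}` via some (possibly nonlinear) decoder `D`, then the
standard basis vector `e k` lies in the `𝔽₂`-span of the transmission vectors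
together with the basis vectors of the side-information coordinates. -/
theorem decodable_implies_span
    (K ℓ : ℕ) (k : Fin K) (Rk : Finset (Fin K)) (hk : k ∉ Rk)
    (u : Fin ℓ → (Fin K → ZMod 2))
    (D : (Fin ℓ → ZMod 2) → ({j : Fin K // j ∈ Rk} → ZMod 2) → ZMod 2)
    (hD : ∀ x : Fin K → ZMod 2,
      D (fun i => ∑ m : Fin K, u i m * x m) (fun j => x j.1) = x k) :
    (Pi.single k 1 : Fin K → ZMod 2) ∈
      Submodule.span (ZMod 2)
        (Set.range u ∪ {v | ∃ j ∈ Rk, v = (Pi.single j 1 : Fin K → ZMod 2)}) :=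
  decodable_implies_span_general K ℓ k Rk u D hD
end

section
/- Fitting characterization (completeness of the enumeration in Algorithm 1): a tuple A : Fin N → Matrix (Fin K) (Fin K) (ZMod 2) is the composite adjacency tuple of some valid sub-hypergraph of the side-information hypergraph if and only if A satisfies the three matrix fitting conditions: (support) A n k k' = 1 implies k' ∈ 𝓜 n; (demand parity) for every k, ∑_{n} A n k k = 1 in ZMod 2; (coupled parity) for every k and k' with k' ≠ k and k' ∉ 𝓡 k, ∑_{n} A n k k' = 0 in ZMod 2. -/
/-!
Only hyperedges whose cached message `k'` is stored at `n` contribute to `A n k k'`, which gives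
the support condition. On the diagonal only demand edges contribute, so `∑ n, A n k k` is the
parity of the number of demand edges of `k`. For `k' ∉ 𝓡 k`, `k' ≠ k`, only coupled edges
contribute, and each is counted once from each of its two senders, so the column sum vanishes.

Conversely, a fitting `A` is realised by the sub-hypergraph taking the demand and cached edges on
the support of `A`, and the coupled edge `(k, k', n, n')` exactly when `A n k k' = A n' k k' = 1`.
Over `𝔽₂` this gives `∑_{n' ≠ n} A n k k' * A n' k k' = A n k k' * A n k k' = A n k k'`, because
the column sum `∑ n', A n' k k'` vanishes.
-/

open Finset

theorem Finset.sum_sum_ne_eq_zero_of_symm {ι R : Type*} [Fintype ι] [DecidableEq ι]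
    [Semiring R] [CharP R 2] (f : ι → ι → R) (hf : ∀ i j, f i j = f j i) :
    ∑ i, ∑ j ∈ univ.filter (· ≠ i), f i j = 0 := by
  rw [sum_sigma']
  refine sum_involution (fun p _ => ⟨p.2, p.1⟩) (fun p _ => ?_) (fun p hp _ hswap => ?_)
    (fun p hp => ?_) (fun _ _ => rfl)
  · rw [hf]
    exact CharTwo.add_self_eq_zero _
  · simp only [mem_sigma, mem_filter, mem_univ, true_and] at hp
    exact hp (congrArg Sigma.fst hswap)
  · simp only [mem_sigma, mem_filter, mem_univ, true_and] at hp ⊢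
    exact hp.symm

namespace ZMod

theorem ite_eq_one_eq_self (x : ZMod 2) : (if x = 1 then 1 else 0 : ZMod 2) = x := by
  revert x; decide

theorem ite_eq_one_and_eq_one (x y : ZMod 2) :
    (if x = 1 ∧ y = 1 then 1 else 0 : ZMod 2) = x * y := by
  revert x y; decide

theorem self_eq_mul_sum_ne_of_sum_eq_zero {ι : Type*} [Fintype ι] [DecidableEq ι]
    {x : ι → ZMod 2} (hx : ∑ j, x j = 0) (i : ι) :
    x i = x i * ∑ j ∈ univ.filter (· ≠ i), x j := by
  have hrest : ∑ j ∈ univ.filter (· ≠ i), x j = x i := by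
    rw [filter_ne', ← neg_eq_self_mod_two (x i), eq_neg_iff_add_eq_zero, add_comm,
      add_sum_erase _ _ (mem_univ i), hx]
  rw [hrest]
  generalize x i = a
  revert a; decide

end ZMod

section SideInformationHypergraph

variable {κ ν : Type*}

def DemandEdges (M : ν → Finset κ) (Ed : Finset (κ × κ × ν × ν)) : Prop :=
  ∀ e ∈ Ed, e.1 = e.2.1 ∧ e.2.2.1 = e.2.2.2 ∧ e.1 ∈ M e.2.2.1

def CachedEdges (M : ν → Finset κ) (R : κ → Finset κ) (Es : Finset (κ × κ × ν × ν)) : Prop :=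
  ∀ e ∈ Es, e.2.1 ≠ e.1 ∧ e.2.1 ∈ R e.1 ∧ e.2.1 ∈ M e.2.2.1 ∧ e.2.2.1 = e.2.2.2

def CoupledEdges (M : ν → Finset κ) (R : κ → Finset κ) (Ec : Finset (κ × κ × ν × ν)) : Prop :=
  ∀ e ∈ Ec, e.2.2.1 ≠ e.2.2.2 ∧ e.2.1 ≠ e.1 ∧ e.2.1 ∉ R e.1 ∧
    e.2.1 ∈ M e.2.2.1 ∧ e.2.1 ∈ M e.2.2.2

variable [DecidableEq κ] [DecidableEq ν] [Fintype ν]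

def compositeAdj (Ed Es Ec : Finset (κ × κ × ν × ν)) (n : ν) (k k' : κ) : ZMod 2 :=
  (if (k, k', n, n) ∈ Ed ∪ Es then 1 else 0) +
    ∑ n' ∈ univ.filter (fun n' => n' ≠ n), if (k, k', n, n') ∈ Ec then 1 else 0

variable {M : ν → Finset κ} {R : κ → Finset κ} {Ed Es Ec : Finset (κ × κ × ν × ν)}

theorem mem_of_compositeAdj_eq_one (hEd : DemandEdges M Ed) (hEs : CachedEdges M R Es)
    (hEc : CoupledEdges M R Ec) {n : ν} {k k' : κ} (h : compositeAdj Ed Es Ec n k k' = 1) :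
    k' ∈ M n := by
  by_contra hM
  have hloop : (k, k', n, n) ∉ Ed ∪ Es := by
    rintro hmem
    rcases mem_union.1 hmem with hd | hs
    · obtain ⟨hkk : k = k', -, hk : k ∈ M n⟩ := hEd _ hd
      exact hM (hkk ▸ hk)
    · exact hM (hEs _ hs).2.2.1
  have hcoupled : ∀ n', (k, k', n, n') ∉ Ec := fun n' hc => hM (hEc _ hc).2.2.2.1
  simp [compositeAdj, hloop, hcoupled] at h

theorem compositeAdj_self (hEs : CachedEdges M R Es) (hEc : CoupledEdges M R Ec)
    (n : ν) (k : κ) :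
    compositeAdj Ed Es Ec n k k = if (k, k, n, n) ∈ Ed then 1 else 0 := by
  have hs : (k, k, n, n) ∉ Es := fun h => (hEs _ h).1 rfl
  have hc : ∀ n', (k, k, n, n') ∉ Ec := fun n' h => (hEc _ h).2.1 rfl
  simp [compositeAdj, hs, hc]

theorem compositeAdj_of_notMem (hEd : DemandEdges M Ed) (hEs : CachedEdges M R Es)
    {n : ν} {k k' : κ} (hk : k' ≠ k) (hR : k' ∉ R k) :
    compositeAdj Ed Es Ec n k k' =
      ∑ n' ∈ univ.filter (fun n' => n' ≠ n), if (k, k', n, n') ∈ Ec then 1 else 0 := by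
  have hd : (k, k', n, n) ∉ Ed := fun h => hk (hEd _ h).1.symm
  have hs : (k, k', n, n) ∉ Es := fun h => hR (hEs _ h).2.1
  simp [compositeAdj, hd, hs]

theorem card_filter_fst_eq_card_diag
    (hEd : ∀ e ∈ Ed, e.1 = e.2.1 ∧ e.2.2.1 = e.2.2.2) (k : κ) :
    #(Ed.filter (·.1 = k)) = #(univ.filter fun n => (k, k, n, n) ∈ Ed) := by
  refine card_nbij' (fun e => e.2.2.1) (fun n => (k, k, n, n)) ?_ ?_ ?_ ?_
  · rintro ⟨a, b, c, d⟩ he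
    obtain ⟨hmem, rfl : a = k⟩ := mem_filter.1 (mem_coe.1 he)
    obtain ⟨rfl : a = b, rfl : c = d⟩ := hEd _ hmem
    simpa using hmem
  · intro n hn
    simpa using hn
  · rintro ⟨a, b, c, d⟩ he
    obtain ⟨hmem, rfl : a = k⟩ := mem_filter.1 (mem_coe.1 he)
    obtain ⟨rfl : a = b, rfl : c = d⟩ := hEd _ hmem
    rfl
  · intro n _
    rfl

theorem sum_compositeAdj_self (hEd : DemandEdges M Ed) (hEs : CachedEdges M R Es)
    (hEc : CoupledEdges M R Ec) (k : κ) :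
    ∑ n, compositeAdj Ed Es Ec n k k = #(Ed.filter (·.1 = k)) := by
  rw [card_filter_fst_eq_card_diag (fun e he => ⟨(hEd e he).1, (hEd e he).2.1⟩), ← sum_boole]
  exact sum_congr rfl fun n _ => compositeAdj_self hEs hEc n k

theorem sum_compositeAdj_of_notMem (hEd : DemandEdges M Ed) (hEs : CachedEdges M R Es)
    (hsym : ∀ k k' n n', (k, k', n, n') ∈ Ec ↔ (k, k', n', n) ∈ Ec)
    {k k' : κ} (hk : k' ≠ k) (hR : k' ∉ R k) :
    ∑ n, compositeAdj Ed Es Ec n k k' = 0 := by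
  simp only [compositeAdj_of_notMem hEd hEs hk hR]
  exact sum_sum_ne_eq_zero_of_symm _ fun n n' => by simp only [hsym k k' n n']

end SideInformationHypergraph

section CanonicalSubhypergraph

variable {κ ν : Type*} [Fintype κ] [Fintype ν] [DecidableEq κ] [DecidableEq ν]
  (R : κ → Finset κ) (A : ν → Matrix κ κ (ZMod 2))

def demandEdgesOf : Finset (κ × κ × ν × ν) :=
  univ.filter fun e => e.1 = e.2.1 ∧ e.2.2.1 = e.2.2.2 ∧ A e.2.2.1 e.1 e.1 = 1

def cachedEdgesOf : Finset (κ × κ × ν × ν) :=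
  univ.filter fun e => e.2.1 ≠ e.1 ∧ e.2.1 ∈ R e.1 ∧ e.2.2.1 = e.2.2.2 ∧ A e.2.2.1 e.1 e.2.1 = 1

def coupledEdgesOf : Finset (κ × κ × ν × ν) :=
  univ.filter fun e => e.2.2.1 ≠ e.2.2.2 ∧ e.2.1 ≠ e.1 ∧ e.2.1 ∉ R e.1 ∧
    A e.2.2.1 e.1 e.2.1 = 1 ∧ A e.2.2.2 e.1 e.2.1 = 1

variable {R A}

@[simp]
theorem mem_demandEdgesOf {k k' : κ} {n n' : ν} :
    (k, k', n, n') ∈ demandEdgesOf A ↔ k = k' ∧ n = n' ∧ A n k k = 1 := by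
  simp [demandEdgesOf]

@[simp]
theorem mem_cachedEdgesOf {k k' : κ} {n n' : ν} :
    (k, k', n, n') ∈ cachedEdgesOf R A ↔ k' ≠ k ∧ k' ∈ R k ∧ n = n' ∧ A n k k' = 1 := by
  simp [cachedEdgesOf]

@[simp]
theorem mem_coupledEdgesOf {k k' : κ} {n n' : ν} :
    (k, k', n, n') ∈ coupledEdgesOf R A ↔
      n ≠ n' ∧ k' ≠ k ∧ k' ∉ R k ∧ A n k k' = 1 ∧ A n' k k' = 1 := by
  simp [coupledEdgesOf]

theorem demandEdges_demandEdgesOf {M : ν → Finset κ}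
    (hA : ∀ n k k', A n k k' = 1 → k' ∈ M n) : DemandEdges M (demandEdgesOf A) := by
  rintro ⟨k, k', n, n'⟩ he
  obtain ⟨rfl, rfl, h⟩ := mem_demandEdgesOf.1 he
  exact ⟨rfl, rfl, hA _ _ _ h⟩

theorem cachedEdges_cachedEdgesOf {M : ν → Finset κ}
    (hA : ∀ n k k', A n k k' = 1 → k' ∈ M n) : CachedEdges M R (cachedEdgesOf R A) := by
  rintro ⟨k, k', n, n'⟩ he
  obtain ⟨hk, hR, rfl, h⟩ := mem_cachedEdgesOf.1 he
  exact ⟨hk, hR, hA _ _ _ h, rfl⟩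

theorem coupledEdges_coupledEdgesOf {M : ν → Finset κ}
    (hA : ∀ n k k', A n k k' = 1 → k' ∈ M n) : CoupledEdges M R (coupledEdgesOf R A) := by
  rintro ⟨k, k', n, n'⟩ he
  obtain ⟨hn, hk, hR, h, h'⟩ := mem_coupledEdgesOf.1 he
  exact ⟨hn, hk, hR, hA _ _ _ h, hA _ _ _ h'⟩

theorem mem_coupledEdgesOf_comm {k k' : κ} {n n' : ν} :
    (k, k', n, n') ∈ coupledEdgesOf R A ↔ (k, k', n', n) ∈ coupledEdgesOf R A := by
  simp only [mem_coupledEdgesOf]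
  tauto

theorem odd_card_filter_demandEdgesOf (hA : ∀ k, ∑ n, A n k k = 1) (k : κ) :
    Odd #((demandEdgesOf A).filter (·.1 = k)) := by
  rw [← ZMod.natCast_eq_one_iff_odd, card_filter_fst_eq_card_diag, ← sum_boole]
  · simpa [ZMod.ite_eq_one_eq_self] using hA k
  · rintro ⟨k, k', n, n'⟩ he
    exact ⟨(mem_demandEdgesOf.1 he).1, (mem_demandEdgesOf.1 he).2.1⟩

theorem compositeAdj_edgesOf (hA : ∀ k k', k' ≠ k → k' ∉ R k → ∑ n, A n k k' = 0)
    (n : ν) (k k' : κ) :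
    compositeAdj (demandEdgesOf A) (cachedEdgesOf R A) (coupledEdgesOf R A) n k k' = A n k k' := by
  unfold compositeAdj
  rcases eq_or_ne k' k with rfl | hk
  · simp [ZMod.ite_eq_one_eq_self]
  by_cases hR : k' ∈ R k
  · simp [hk, hk.symm, hR, ZMod.ite_eq_one_eq_self]
  · have hterm : ∀ n' ∈ univ.filter (· ≠ n),
        (if (k, k', n, n') ∈ coupledEdgesOf R A then 1 else 0 : ZMod 2) = A n k k' * A n' k k' := by
      intro n' hn'
      simp only [mem_coupledEdgesOf, (mem_filter.1 hn').2.symm, hk, hR, ne_eq, not_false_eq_true,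
        true_and]
      exact ZMod.ite_eq_one_and_eq_one _ _
    rw [if_neg (by simp [hk, hk.symm, hR]), zero_add, sum_congr rfl hterm, ← mul_sum]
    exact (ZMod.self_eq_mul_sum_ne_of_sum_eq_zero (hA k k' hk hR) n).symm

end CanonicalSubhypergraph

theorem fits_iff_valid_subhypergraph_general
    (K N : ℕ) (M : Fin N → Finset (Fin K)) (R : Fin K → Finset (Fin K))
    (A : Fin N → Matrix (Fin K) (Fin K) (ZMod 2)) :
    (∃ Ed' Es' Ec' : Finset (Fin K × Fin K × Fin N × Fin N),
      -- `Ed'` consists of demand hyperedges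
      (∀ e ∈ Ed', e.1 = e.2.1 ∧ e.2.2.1 = e.2.2.2 ∧ e.1 ∈ M e.2.2.1) ∧
      -- `Es'` consists of cached hyperedges
      (∀ e ∈ Es', e.2.1 ≠ e.1 ∧ e.2.1 ∈ R e.1 ∧ e.2.1 ∈ M e.2.2.1 ∧
        e.2.2.1 = e.2.2.2) ∧
      -- `Ec'` consists of coupled hyperedges
      (∀ e ∈ Ec', e.2.2.1 ≠ e.2.2.2 ∧ e.2.1 ≠ e.1 ∧ e.2.1 ∉ R e.1 ∧
        e.2.1 ∈ M e.2.2.1 ∧ e.2.1 ∈ M e.2.2.2) ∧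
      -- `Ec'` is symmetric in the sender pair
      (∀ k k' : Fin K, ∀ n n' : Fin N, (k, k', n, n') ∈ Ec' ↔ (k, k', n', n) ∈ Ec') ∧
      -- validity: every receiver appears in an odd number of demand hyperedges
      (∀ k : Fin K, Odd (Ed'.filter (fun e => e.1 = k)).card) ∧
      -- `A` is the composite adjacency tuple of the sub-hypergraph
      (∀ n k k', A n k k' =
        (if (k, k', n, n) ∈ Ed' ∪ Es' then (1 : ZMod 2) else 0) +
        ∑ n' ∈ univ.filter (fun n' => n' ≠ n),
          (if (k, k', n, n') ∈ Ec' then (1 : ZMod 2) else 0)))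
    ↔ Fits K N M R A := by
  constructor
  · rintro ⟨Ed, Es, Ec, hEd, hEs, hEc, hsym, hodd, hA⟩
    obtain rfl : A = compositeAdj Ed Es Ec := funext fun n => funext fun k => funext (hA n k)
    refine ⟨fun n k k' => mem_of_compositeAdj_eq_one hEd hEs hEc, fun k => ?_,
      fun k k' => sum_compositeAdj_of_notMem hEd hEs hsym⟩
    rw [sum_compositeAdj_self hEd hEs hEc, ZMod.natCast_eq_one_iff_odd]
    exact hodd k
  · rintro ⟨hsupp, hdem, hcoup⟩
    exact ⟨_, _, _, demandEdges_demandEdgesOf hsupp, cachedEdges_cachedEdgesOf hsupp,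
      coupledEdges_coupledEdgesOf hsupp, fun _ _ _ _ => mem_coupledEdgesOf_comm,
      odd_card_filter_demandEdgesOf hdem, fun n k k' => (compositeAdj_edgesOf hcoup n k k').symm⟩

/-- Fitting characterization (completeness of the enumeration in Algorithm 1):
a tuple `A` is the composite adjacency tuple of some valid sub-hypergraph of
the side-information hypergraph if and only if `A` satisfies the three matrix
fitting conditions.  Hyperedges are encoded as 4-tuples `(k, k', n, n')`. -/
theorem fits_iff_valid_subhypergraph
    (K N : ℕ) (M : Fin N → Finset (Fin K)) (R : Fin K → Finset (Fin K))
    (hR : ∀ k, k ∉ R k)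
    (A : Fin N → Matrix (Fin K) (Fin K) (ZMod 2)) :
    (∃ Ed' Es' Ec' : Finset (Fin K × Fin K × Fin N × Fin N),
      -- `Ed'` consists of demand hyperedges
      (∀ e ∈ Ed', e.1 = e.2.1 ∧ e.2.2.1 = e.2.2.2 ∧ e.1 ∈ M e.2.2.1) ∧
      -- `Es'` consists of cached hyperedges
      (∀ e ∈ Es', e.2.1 ≠ e.1 ∧ e.2.1 ∈ R e.1 ∧ e.2.1 ∈ M e.2.2.1 ∧
        e.2.2.1 = e.2.2.2) ∧
      -- `Ec'` consists of coupled hyperedges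
      (∀ e ∈ Ec', e.2.2.1 ≠ e.2.2.2 ∧ e.2.1 ≠ e.1 ∧ e.2.1 ∉ R e.1 ∧
        e.2.1 ∈ M e.2.2.1 ∧ e.2.1 ∈ M e.2.2.2) ∧
      -- `Ec'` is symmetric in the sender pair
      (∀ k k' : Fin K, ∀ n n' : Fin N, (k, k', n, n') ∈ Ec' ↔ (k, k', n', n) ∈ Ec') ∧
      -- validity: every receiver appears in an odd number of demand hyperedges
      (∀ k : Fin K, Odd (Ed'.filter (fun e => e.1 = k)).card) ∧
      -- `A` is the composite adjacency tuple of the sub-hypergraph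
      (∀ n k k', A n k k' =
        (if (k, k', n, n) ∈ Ed' ∪ Es' then (1 : ZMod 2) else 0) +
        ∑ n' ∈ univ.filter (fun n' => n' ≠ n),
          (if (k, k', n, n') ∈ Ec' then (1 : ZMod 2) else 0)))
    ↔ Fits K N M R A :=
  fits_iff_valid_subhypergraph_general K N M R A
end

section
/- Theorem 3 (complement clique lower bound): let V ⊆ Fin K be a nonempty set of receivers such that V × V ⊆ 𝓖̄_{n₀} for some sender n₀, and such that for every sender n ∈ Fin N either V × V ⊆ 𝓖̄_n, or k ∉ 𝓜 n for every k ∈ V. Then for every fitting tuple A one has |V| ≤ ∑_{n} rank_{𝔽₂}(A n); consequently |V| is a lower bound on the hyper-minrank of the instance. -/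
open Finset

/-- The complement relation `𝓖̄ n` of the side-information hypergraph at sender
`n`: `(k, k)` is present iff `k ∈ 𝓜 n`, and for `k' ≠ k`, `(k, k')` is present
iff no cached and no coupled hyperedge joins `k` to `k'` at sender `n`. -/
def GBar (K N : ℕ) (M : Fin N → Finset (Fin K)) (R : Fin K → Finset (Fin K))
    (n : Fin N) (k k' : Fin K) : Prop :=
  if k' = k then k ∈ M n
  else ¬(k' ∈ R k ∧ k' ∈ M n) ∧
    ¬(k' ∉ R k ∧ k' ∈ M n ∧ ∃ n', n' ≠ n ∧ k' ∈ M n')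

/-!
Sum the tuple to `S = ∑ n, A n`. On `V × V` every summand is either supported in the
complement-clique pattern, where the coupled parity constraint forces each off-diagonal
entry to vanish (a lone sender storing `k'` cannot cancel its own entry), or is zero
because `V` is not stored at that sender. So `S` restricted to `V × V` is the identity,
and `|V| ≤ rank S ≤ ∑ n, rank (A n)` by subadditivity of rank.
-/

namespace Matrix

variable {m n ι R : Type*} [Fintype n] [Field R]

theorem rank_add_le (A B : Matrix m n R) : (A + B).rank ≤ A.rank + B.rank := by
  rw [rank, rank, rank, mulVecLin_add]
  exact (Submodule.finrank_mono (LinearMap.range_add_le _ _)).trans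
    (Submodule.finrank_add_le_finrank_add_finrank _ _)

theorem rank_sum_le (s : Finset ι) (A : ι → Matrix m n R) :
    (∑ i ∈ s, A i).rank ≤ ∑ i ∈ s, (A i).rank :=
  Finset.le_sum_of_subadditive rank (rank_zero (R := R)).le rank_add_le s A

theorem card_le_rank_of_submatrix_eq_one [Fintype ι] [DecidableEq ι] (A : Matrix m n R)
    (r : ι → m) (c : ι → n) (h : A.submatrix r c = 1) : Fintype.card ι ≤ A.rank := by
  simpa [h] using A.rank_submatrix_le r c

end Matrix

lemma ZMod.two_eq_one_of_ne_zero {a : ZMod 2} (ha : a ≠ 0) : a = 1 :=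
  Fin.eq_one_of_ne_zero a ha

namespace Fits

variable {K N : ℕ} {M : Fin N → Finset (Fin K)} {R : Fin K → Finset (Fin K)}
  {A : Fin N → Matrix (Fin K) (Fin K) (ZMod 2)}

lemma apply_eq_zero_of_notMem (hA : Fits K N M R A) {n : Fin N} {k k' : Fin K}
    (hk' : k' ∉ M n) : A n k k' = 0 := by
  by_contra h
  exact hk' (hA.1 n k k' (ZMod.two_eq_one_of_ne_zero h))

lemma apply_eq_zero_of_gBar (hA : Fits K N M R A) {n : Fin N} {k k' : Fin K}
    (hne : k' ≠ k) (hG : GBar K N M R n k k') : A n k k' = 0 := by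
  rw [GBar, if_neg hne] at hG
  obtain ⟨hnotCached, hnotCoupled⟩ := hG
  by_contra h
  have hstored : k' ∈ M n := hA.1 n k k' (ZMod.two_eq_one_of_ne_zero h)
  have hR : k' ∉ R k := fun hR => hnotCached ⟨hR, hstored⟩
  have hothers : ∀ n' ≠ n, A n' k k' = 0 := fun n' hn' =>
    hA.apply_eq_zero_of_notMem fun hM => hnotCoupled ⟨hR, hstored, n', hn', hM⟩
  have hparity := hA.2.2 k k' hne hR
  rw [Finset.sum_eq_single_of_mem n (mem_univ n) fun n' _ hn' => hothers n' hn'] at hparity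
  exact h hparity

lemma submatrix_sum_eq_one (hA : Fits K N M R A) {V : Finset (Fin K)}
    (hV : ∀ n, (∀ k ∈ V, ∀ k' ∈ V, GBar K N M R n k k') ∨ (∀ k ∈ V, k ∉ M n)) :
    (∑ n, A n).submatrix ((↑) : V → Fin K) ((↑) : V → Fin K) = 1 := by
  ext i j
  rw [Matrix.submatrix_apply, Matrix.sum_apply]
  by_cases hij : i = j
  · subst hij
    simpa using hA.2.1 i
  · have hne : (j : Fin K) ≠ i := fun h => hij (Subtype.ext h).symm
    rw [Matrix.one_apply_ne hij]
    refine Finset.sum_eq_zero fun n _ => ?_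
    rcases hV n with hG | hNotStored
    · exact hA.apply_eq_zero_of_gBar hne (hG i i.2 j j.2)
    · exact hA.apply_eq_zero_of_notMem (hNotStored j j.2)

lemma card_le_sum_rank (hA : Fits K N M R A) {V : Finset (Fin K)}
    (hV : ∀ n, (∀ k ∈ V, ∀ k' ∈ V, GBar K N M R n k k') ∨ (∀ k ∈ V, k ∉ M n)) :
    V.card ≤ ∑ n, (A n).rank :=
  calc V.card = Fintype.card V := (Fintype.card_coe V).symm
    _ ≤ (∑ n, A n).rank :=
      Matrix.card_le_rank_of_submatrix_eq_one _ _ _ (hA.submatrix_sum_eq_one hV)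
    _ ≤ ∑ n, (A n).rank := Matrix.rank_sum_le _ _

end Fits

theorem complement_clique_lower_bound_general
    (K N : ℕ) (M : Fin N → Finset (Fin K)) (R : Fin K → Finset (Fin K))
    (V : Finset (Fin K))
    (hall : ∀ n : Fin N,
      (∀ k ∈ V, ∀ k' ∈ V, GBar K N M R n k k') ∨ (∀ k ∈ V, k ∉ M n)) :
    (∀ A : Fin N → Matrix (Fin K) (Fin K) (ZMod 2),
      Fits K N M R A → V.card ≤ ∑ n, (A n).rank) ∧
    (∀ A : Fin N → Matrix (Fin K) (Fin K) (ZMod 2),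
      Fits K N M R A →
      V.card ≤ sInf {r : ℕ | ∃ B : Fin N → Matrix (Fin K) (Fin K) (ZMod 2),
        Fits K N M R B ∧ ∑ n, (B n).rank = r}) := by
  refine ⟨fun A hA => hA.card_le_sum_rank hall, fun A hA => ?_⟩
  exact le_csInf ⟨_, A, hA, rfl⟩ fun r ⟨B, hB, hr⟩ => hr ▸ hB.card_le_sum_rank hall

/-- Theorem 3 (complement clique lower bound): if `V` is a nonempty set of
receivers with `V × V ⊆ 𝓖̄ n₀` for some sender `n₀`, and for every sender `n`
either `V × V ⊆ 𝓖̄ n` or no message of `V` is stored at `n`, then `|V|` lower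
bounds the total rank of every fitting tuple, hence the hyper-minrank. -/
theorem complement_clique_lower_bound
    (K N : ℕ) (M : Fin N → Finset (Fin K)) (R : Fin K → Finset (Fin K))
    (hR : ∀ k, k ∉ R k)
    (V : Finset (Fin K)) (hV : V.Nonempty)
    (n₀ : Fin N) (hV0 : ∀ k ∈ V, ∀ k' ∈ V, GBar K N M R n₀ k k')
    (hall : ∀ n : Fin N,
      (∀ k ∈ V, ∀ k' ∈ V, GBar K N M R n k k') ∨ (∀ k ∈ V, k ∉ M n)) :
    (∀ A : Fin N → Matrix (Fin K) (Fin K) (ZMod 2),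
      Fits K N M R A → V.card ≤ ∑ n, (A n).rank) ∧
    (∀ A : Fin N → Matrix (Fin K) (Fin K) (ZMod 2),
      Fits K N M R A →
      V.card ≤ sInf {r : ℕ | ∃ B : Fin N → Matrix (Fin K) (Fin K) (ZMod 2),
        Fits K N M R B ∧ ∑ n, (B n).rank = r}) :=
  complement_clique_lower_bound_general K N M R V hall
end

section
/- Lemma (complexity comparison, C₁ ≤ C₂): assume d_m ≥ 1 for every m ∈ Fin K. Define the integers E₁ := ∑_{k ∈ Fin K} ( (d_k − 1) + |𝓡 k| + ∑_{m ∈ Fin K, m ∉ 𝓡 k ∪ {k}} (d_m − 1) ) and E₂ := ∑_{k ∈ Fin K} ( ∑_{n ∈ Fin N} ( |𝓡 k ∩ 𝓜 n| + |((Fin K \ 𝓡 k) ∩ 𝓜 n ∩ 𝓜_c| ) − |(Fin K \ 𝓡 k) ∩ 𝓜_c| ). Then E₂ − E₁ = ∑_{k ∈ Fin K} ∑_{m ∈ 𝓡 k} (d_m − 1) ≥ 0, hence N·K³·2^{E₁} ≤ N·K³·2^{E₂}, with equality if and only if d_m = 1 for every m ∈ 𝓡 k and every k ∈ Fin K. 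-/
open Finset

/-!
Double counting the incidences `m ∈ 𝓜 n` gives `∑ₙ |S ∩ 𝓜 n| = ∑_{m ∈ S} d_m`. Since `d_m - 1`
vanishes off `𝓜_c`, the `k`-th summand of `E₂` becomes `∑_{m ∈ 𝓡 k} d_m + ∑_{m ∉ 𝓡 k} (d_m - 1)`,
while, as `k ∉ 𝓡 k`, that of `E₁` is `|𝓡 k| + ∑_{m ∉ 𝓡 k} (d_m - 1)`. Their difference is
`∑_{m ∈ 𝓡 k} (d_m - 1) ≥ 0`, which vanishes exactly when every side-information message has
`d_m = 1`; the prefactor `N K³` is positive as soon as `K > 0`, because `d_m ≥ 1` forces `N > 0`.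
-/
theorem sum_card_inter_eq_sum_card_filter_mem {α ι : Type*} [Fintype ι] [DecidableEq α]
    (M : ι → Finset α) (S : Finset α) :
    ∑ n, #(S ∩ M n) = ∑ m ∈ S, #{n | m ∈ M n} := by
  simpa [bipartiteAbove, bipartiteBelow, filter_mem_eq_inter] using
    (sum_card_bipartiteAbove_eq_sum_card_bipartiteBelow (s := S) (t := univ)
      (r := fun m n => m ∈ M n)).symm

theorem sum_filter_two_le_sub_one {α : Type*} {d : α → ℕ} (hd1 : ∀ m, 1 ≤ d m)
    (s : Finset α) : ∑ m ∈ s with 2 ≤ d m, ((d m : ℤ) - 1) = ∑ m ∈ s, ((d m : ℤ) - 1) :=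
  sum_filter_of_ne fun m _ hne => by have := hd1 m; omega

theorem add_sum_filter_notMem_union_singleton {α M : Type*} [Fintype α] [DecidableEq α]
    [AddCommMonoid M] (f : α → M) {R : Finset α} {k : α} (hk : k ∉ R) :
    f k + ∑ m with m ∉ R ∪ {k}, f m = ∑ m ∈ univ \ R, f m := by
  have : ({m | m ∉ R ∪ {k}} : Finset α) = (univ \ R).erase k := by
    ext m; simp
  rw [this, add_sum_erase _ _ (by simpa using hk)]

theorem kimNo_exponent_term_sub_alg1_exponent_term {α ι : Type*} [Fintype α] [Fintype ι]
    [DecidableEq α] (M : ι → Finset α) {R : Finset α} {k : α} (hk : k ∉ R)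
    {d : α → ℕ} (hd : ∀ m, d m = #{n | m ∈ M n}) (hd1 : ∀ m, 1 ≤ d m) :
    ((∑ n, ((#(R ∩ M n) : ℤ) + #((univ \ R) ∩ M n ∩ univ.filter (fun m => 2 ≤ d m)))) -
        #((univ \ R) ∩ univ.filter (fun m => 2 ≤ d m))) -
      (((d k : ℤ) - 1) + #R + ∑ m with m ∉ R ∪ {k}, ((d m : ℤ) - 1)) =
    ∑ m ∈ R, ((d m : ℤ) - 1) := by
  have hdeg (S : Finset α) : ∑ n, (#(S ∩ M n) : ℤ) = ∑ m ∈ S, (d m : ℤ) := by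
    simp only [hd]; exact_mod_cast sum_card_inter_eq_sum_card_filter_mem M S
  have hcard (S : Finset α) : ∑ m ∈ S, ((d m : ℤ) - 1) = ∑ m ∈ S, (d m : ℤ) - #S := by
    simp [sum_sub_distrib]
  have hrepl : (univ \ R) ∩ univ.filter (fun m => 2 ≤ d m) = {m ∈ univ \ R | 2 ≤ d m} := by
    rw [inter_filter, inter_univ]
  have hcompl := sum_filter_two_le_sub_one hd1 (univ \ R)
  rw [← add_sum_filter_notMem_union_singleton _ hk, hcard] at hcompl
  simp only [inter_right_comm (univ \ R) (M _)]
  rw [sum_add_distrib, hdeg, hdeg, hrepl, hcard R]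
  linarith

theorem sum_sum_sub_one_eq_zero_iff {α β : Type*} [Fintype β] {d : α → ℕ} (hd1 : ∀ m, 1 ≤ d m)
    (R : β → Finset α) :
    ∑ k, ∑ m ∈ R k, ((d m : ℤ) - 1) = 0 ↔ ∀ k, ∀ m ∈ R k, d m = 1 := by
  have hnonneg (m : α) : 0 ≤ (d m : ℤ) - 1 := by have := hd1 m; omega
  rw [sum_eq_zero_iff_of_nonneg fun k _ => sum_nonneg fun m _ => hnonneg m]
  simp only [mem_univ, true_implies, sum_eq_zero_iff_of_nonneg fun m _ => hnonneg m, sub_eq_zero]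
  norm_cast

/-- Lemma (complexity comparison, `C₁ ≤ C₂`): the search-space exponent `E₁` of
the paper's exact Algorithm 1 never exceeds the exponent `E₂` of the exhaustive
Kim–No algorithm; their difference is exactly `∑ k, ∑ m ∈ 𝓡 k, (d m - 1)`, and
the complexities `N·K³·2^{Eᵢ}` compare accordingly, with equality iff no
side-information symbol is replicated across senders. -/
theorem complexity_comparison_C1_le_C2
    (K N : ℕ) (M : Fin N → Finset (Fin K)) (R : Fin K → Finset (Fin K))
    (hR : ∀ k, k ∉ R k)
    (d : Fin K → ℕ) (hd : ∀ m, d m = (univ.filter (fun n => m ∈ M n)).card)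
    (hd1 : ∀ m, 1 ≤ d m)
    (Mc : Finset (Fin K)) (hMc : Mc = univ.filter (fun m => 2 ≤ d m))
    (E₁ E₂ : ℤ)
    (hE₁ : E₁ = ∑ k : Fin K, (((d k : ℤ) - 1) + ((R k).card : ℤ) +
      ∑ m ∈ univ.filter (fun m => m ∉ R k ∪ {k}), ((d m : ℤ) - 1)))
    (hE₂ : E₂ = ∑ k : Fin K,
      ((∑ n : Fin N, (((R k ∩ M n).card : ℤ) +
          (((univ \ R k) ∩ M n ∩ Mc).card : ℤ))) -
        (((univ \ R k) ∩ Mc).card : ℤ))) :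
    E₂ - E₁ = ∑ k : Fin K, ∑ m ∈ R k, ((d m : ℤ) - 1) ∧
    0 ≤ E₂ - E₁ ∧
    (N * K ^ 3 : ℝ) * 2 ^ E₁ ≤ (N * K ^ 3 : ℝ) * 2 ^ E₂ ∧
    ((N * K ^ 3 : ℝ) * 2 ^ E₁ = (N * K ^ 3 : ℝ) * 2 ^ E₂ ↔
      ∀ k : Fin K, ∀ m ∈ R k, d m = 1) := by
  subst hMc
  have hdiff : E₂ - E₁ = ∑ k, ∑ m ∈ R k, ((d m : ℤ) - 1) := by
    rw [hE₁, hE₂, ← sum_sub_distrib]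
    exact sum_congr rfl fun k _ => kimNo_exponent_term_sub_alg1_exponent_term M (hR k) hd hd1
  have hle : 0 ≤ E₂ - E₁ :=
    hdiff ▸ sum_nonneg fun k _ => sum_nonneg fun m _ => by have := hd1 m; omega
  refine ⟨hdiff, hle, by gcongr <;> [norm_num; omega], ?_⟩
  rcases K.eq_zero_or_pos with rfl | hK
  · simp
  obtain ⟨n, -⟩ := card_pos.mp (hd ⟨0, hK⟩ ▸ hd1 ⟨0, hK⟩)
  have hc : (N * K ^ 3 : ℝ) ≠ 0 := by have := n.pos; positivity
  rw [mul_right_inj' hc, zpow_right_inj₀ two_pos (by norm_num), eq_comm, ← sub_eq_zero, hdiff,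
    sum_sum_sub_one_eq_zero_iff hd1]
end

section
/- C₁-versus-C₃ exponent comparison (Lemma on comparison with LT–CMAR): let N ≥ 1 and set a_n := |𝓜 n| for n ∈ Fin N. Then E₃ := ∑_{n ∈ Fin N} (a_n² + a_n)/2 ≥ (∑_{n ∈ Fin N} a_n)² / (2N) (as real numbers). Consequently, under the hypotheses d_m ≥ 1 for all m, |𝓡 k| ≤ r₀ for all k, and ∑_n a_n ≤ (1+δ)·K with δ ≥ 0, if moreover K·r₀ + δ·K² ≤ (∑_n a_n)²/(2N), then E₁ ≤ E₃ and hence N·K³·2^{E₁} ≤ N·K³·2^{E₃}, i.e. the complexity of the exact Algorithm 1 does not exceed the exhaustive LT–CMAR complexity. -/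
open Finset

/-! Power-mean (Cauchy–Schwarz) gives `E₃ ≥ (∑ a)² / (2N)`. For `E₁`, each inner sum is at most
`∑ m (d m - 1) = ∑ a - K` (as `d m ≥ 1` and double counting), so
`E₁ ≤ K r₀ + K (∑ a - K) ≤ K r₀ + δ K²` by the load bound; the gap hypothesis then closes the
chain, and `2 ^ ·` is monotone. -/

lemma sq_sum_div_two_mul_card_le_sum_sq_add_div_two {ι : Type*} [Fintype ι] (f : ι → ℝ)
    (hf : ∀ i, 0 ≤ f i) :
    (∑ i, f i) ^ 2 / (2 * Fintype.card ι) ≤ ∑ i, (f i ^ 2 + f i) / 2 := by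
  have hpow : (∑ i, f i) ^ 2 / Fintype.card ι ≤ ∑ i, f i ^ 2 := by
    simpa using pow_sum_div_card_le_sum_pow (s := univ) (fun i _ => hf i) 1
  calc (∑ i, f i) ^ 2 / (2 * Fintype.card ι)
      = (∑ i, f i) ^ 2 / Fintype.card ι / 2 := by rw [div_div, mul_comm]
    _ ≤ (∑ i, f i ^ 2) / 2 := by gcongr
    _ ≤ ∑ i, (f i ^ 2 + f i) / 2 := by
      rw [sum_div]
      gcongr with i
      linarith [hf i]

lemma sum_card_filter_mem_eq_sum_card {α β : Type*} [Fintype α] [Fintype β] [DecidableEq α]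
    (M : β → Finset α) :
    ∑ m : α, #{n | m ∈ M n} = ∑ n : β, #(M n) := by
  have := sum_card_bipartiteAbove_eq_sum_card_bipartiteBelow (s := univ) (t := univ)
    (r := fun n m => m ∈ M n)
  simp only [bipartiteAbove, bipartiteBelow, filter_univ_mem] at this
  exact this.symm

lemma sum_filter_sub_one_le {κ : Type*} [Fintype κ] (d : κ → ℕ) (hd : ∀ m, 1 ≤ d m)
    (p : κ → Prop) [DecidablePred p] :
    ∑ m ∈ univ.filter p, ((d m : ℤ) - 1) ≤ ∑ m, (d m : ℤ) - Fintype.card κ := by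
  calc ∑ m ∈ univ.filter p, ((d m : ℤ) - 1)
      ≤ ∑ m, ((d m : ℤ) - 1) :=
        sum_le_univ_sum_of_nonneg fun m => sub_nonneg.mpr (by exact_mod_cast hd m)
    _ = ∑ m, (d m : ℤ) - Fintype.card κ := by simp [sum_sub_distrib]

lemma sum_card_add_sum_filter_sub_one_le {κ : Type*} [Fintype κ] [DecidableEq κ]
    (R : κ → Finset κ) (r₀ : ℕ) (hr : ∀ k, #(R k) ≤ r₀) (d : κ → ℕ) (hd : ∀ m, 1 ≤ d m) :
    ∑ k, ((#(R k) : ℤ) + ∑ m ∈ univ.filter (fun m => m ∉ R k), ((d m : ℤ) - 1))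
      ≤ Fintype.card κ * (r₀ + (∑ m, (d m : ℤ) - Fintype.card κ)) := by
  calc _ ≤ ∑ _k : κ, ((r₀ : ℤ) + (∑ m, (d m : ℤ) - Fintype.card κ)) := by
        gcongr with k
        · exact_mod_cast hr k
        · exact sum_filter_sub_one_le d hd _
    _ = _ := by simp

theorem C1_vs_C3_comparison_general
    (K N : ℕ)
    (M : Fin N → Finset (Fin K)) (R : Fin K → Finset (Fin K))
    (a : Fin N → ℕ) (ha : ∀ n, a n = (M n).card)
    (d : Fin K → ℕ) (hd : ∀ m, d m = (univ.filter (fun n => m ∈ M n)).card)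
    (hd1 : ∀ m, 1 ≤ d m)
    (r₀ : ℕ) (hr : ∀ k, (R k).card ≤ r₀)
    (δ : ℝ)
    (hload : ((∑ n : Fin N, a n : ℕ) : ℝ) ≤ (1 + δ) * K)
    (E₁ : ℤ)
    (hE₁ : E₁ = ∑ k : Fin K, (((R k).card : ℤ) +
      ∑ m ∈ univ.filter (fun m => m ∉ R k), ((d m : ℤ) - 1)))
    (E₃ : ℝ)
    (hE₃ : E₃ = ∑ n : Fin N, (((a n : ℝ) ^ 2 + (a n : ℝ)) / 2)) :
    ((∑ n : Fin N, a n : ℕ) : ℝ) ^ 2 / (2 * N) ≤ E₃ ∧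
    ((K * r₀ + δ * K ^ 2 : ℝ) ≤ ((∑ n : Fin N, a n : ℕ) : ℝ) ^ 2 / (2 * N) →
      (E₁ : ℝ) ≤ E₃ ∧
      (N * K ^ 3 : ℝ) * (2 : ℝ) ^ (E₁ : ℝ) ≤ (N * K ^ 3 : ℝ) * (2 : ℝ) ^ E₃) := by
  set S : ℕ := ∑ n, a n
  have hE₃_ge : (S : ℝ) ^ 2 / (2 * N) ≤ E₃ := by
    simpa [hE₃, S] using
      sq_sum_div_two_mul_card_le_sum_sq_add_div_two (fun n => (a n : ℝ)) (fun n => by positivity)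
  refine ⟨hE₃_ge, fun hgap => ?_⟩
  have hdS : ∑ m, d m = S := by
    simp only [hd, S, ha, sum_card_filter_mem_eq_sum_card]
  have hE₁_le : (E₁ : ℝ) ≤ K * (r₀ + ((S : ℝ) - K)) := by
    have := hE₁ ▸ sum_card_add_sum_filter_sub_one_le R r₀ hr d hd1
    rw [← Nat.cast_sum, hdS] at this
    simpa using (Int.cast_le (R := ℝ)).mpr this
  have hE₁E₃ : (E₁ : ℝ) ≤ E₃ := by
    have hK : (0 : ℝ) ≤ K := K.cast_nonneg
    nlinarith
  exact ⟨hE₁E₃, by gcongr; norm_num⟩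

/-- `C₁`-versus-`C₃` exponent comparison (comparison with LT–CMAR): the LT–CMAR
exponent `E₃` is at least `(∑ n, a n)² / (2N)` by Cauchy–Schwarz, and hence,
under bounded replication and bounded side information, if
`K·r₀ + δ·K² ≤ (∑ n, a n)²/(2N)` then `E₁ ≤ E₃` and the complexity of the exact
Algorithm 1 does not exceed the exhaustive LT–CMAR complexity. -/
theorem C1_vs_C3_comparison
    (K N : ℕ) (hN : 1 ≤ N)
    (M : Fin N → Finset (Fin K)) (R : Fin K → Finset (Fin K))
    (hR : ∀ k, k ∉ R k)
    (a : Fin N → ℕ) (ha : ∀ n, a n = (M n).card)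
    (d : Fin K → ℕ) (hd : ∀ m, d m = (univ.filter (fun n => m ∈ M n)).card)
    (hd1 : ∀ m, 1 ≤ d m)
    (r₀ : ℕ) (hr : ∀ k, (R k).card ≤ r₀)
    (δ : ℝ) (hδ : 0 ≤ δ)
    (hload : ((∑ n : Fin N, a n : ℕ) : ℝ) ≤ (1 + δ) * K)
    (E₁ : ℤ)
    (hE₁ : E₁ = ∑ k : Fin K, (((R k).card : ℤ) +
      ∑ m ∈ univ.filter (fun m => m ∉ R k), ((d m : ℤ) - 1)))
    (E₃ : ℝ)
    (hE₃ : E₃ = ∑ n : Fin N, (((a n : ℝ) ^ 2 + (a n : ℝ)) / 2)) :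
    ((∑ n : Fin N, a n : ℕ) : ℝ) ^ 2 / (2 * N) ≤ E₃ ∧
    ((K * r₀ + δ * K ^ 2 : ℝ) ≤ ((∑ n : Fin N, a n : ℕ) : ℝ) ^ 2 / (2 * N) →
      (E₁ : ℝ) ≤ E₃ ∧
      (N * K ^ 3 : ℝ) * (2 : ℝ) ^ (E₁ : ℝ) ≤ (N * K ^ 3 : ℝ) * (2 : ℝ) ^ E₃) :=
  C1_vs_C3_comparison_general K N M R a ha d hd hd1 r₀ hr δ hload E₁ hE₁ E₃ hE₃
end

section
/- Search-space size of Algorithm 1: assume d_m ≥ 1 for every m ∈ Fin K. Then the number of fitting tuples A : Fin N → Matrix (Fin K) (Fin K) (ZMod 2) equals 2 raised to the power ∑_{k ∈ Fin K} ( (d_k − 1) + ∑_{k' ∈ 𝓡 k} d_{k'} + ∑_{k' ∈ Fin K, k' ∉ 𝓡 k ∪ {k}} (d_{k'} − 1) ). (For each row k independently: the diagonal entries (A n k k)_n range over all odd-parity 0/1 assignments supported on 𝓜(k), contributing 2^{d_k−1} choices; for each cached k' ∈ 𝓡 k the entries (A n k k')_n range freely over assignments supported on 𝓜(k'), contributing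 2^{d_{k'}} choices; and for each non-cached k' ≠ k they range over even-parity assignments supported on 𝓜(k'), contributing 2^{d_{k'}−1} choices.) -/
/-!
`Fits` decouples over the entry positions `(k, k')`: the vector `(A n k k')ₙ` ranges over the
`0/1` vectors supported on the senders `𝓜(k')`, with sum prescribed by the identity matrix unless
`k' ∈ 𝓡 k`. Over an additive group, prescribing the sum of a vector with nonempty support set `S`
just determines one coordinate `a ∈ S` from the others, so it cuts `2 ^ |S|` down to
`2 ^ (|S| - 1)`.
-/

open Finset

variable {ι α G : Type*}

theorem Nat.card_fun_sum_eq [Fintype α] [AddCommGroup G] (a : α) (c : G) :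
    Nat.card {f : α → G // ∑ i, f i = c} = Nat.card G ^ (Nat.card α - 1) := by
  classical
  let e : {f : α → G // ∑ i, f i = c} ≃ ({i // i ≠ a} → G) :=
    { toFun f i := f.1 i
      invFun g := ⟨fun i => if h : i = a then c - ∑ j, g j else g ⟨i, h⟩, by
        simp [Fintype.sum_eq_add_sum_subtype_ne _ a, fun i : {i // i ≠ a} => i.2]⟩
      left_inv f := by
        ext i
        by_cases h : i = a
        · subst h
          simp [← f.2, Fintype.sum_eq_add_sum_subtype_ne _ i]
        · simp [h]
      right_inv g := by
        ext i
        simp [i.2] }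
  simp [Nat.card_congr e, Nat.card_fun]

def supportedFunEquivPi [DecidableEq ι] [Zero G] (S : Finset ι) :
    {v : ι → G // Function.support v ⊆ S} ≃ (S → G) where
  toFun v i := v.1 i
  invFun f := ⟨fun i => if h : i ∈ S then f ⟨i, h⟩ else 0, fun i hi => by
    by_contra h
    exact hi (dif_neg h)⟩
  left_inv v := by
    ext i
    by_cases h : i ∈ S
    · simp [h]
    · simpa [h] using (Function.notMem_support.1 (mt (v.2 ·) h)).symm
  right_inv f := by
    ext i
    simp

theorem sum_supportedFunEquivPi [Fintype ι] [DecidableEq ι] [AddCommMonoid G] (S : Finset ι)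
    (v : {v : ι → G // Function.support v ⊆ S}) :
    ∑ i, supportedFunEquivPi S v i = ∑ i, v.1 i := by
  change ∑ i : S, v.1 i = _
  rw [Finset.sum_coe_sort S v.1]
  exact Finset.sum_subset (subset_univ S) fun i _ hi => Function.notMem_support.1 (mt (v.2 ·) hi)

theorem Nat.card_fun_support_subset [Zero G] (S : Finset ι) :
    Nat.card {v : ι → G // Function.support v ⊆ S} = Nat.card G ^ S.card := by
  classical
  rw [Nat.card_congr (supportedFunEquivPi S), Nat.card_fun, Nat.card_eq_finsetCard]

theorem Nat.card_fun_support_subset_sum_eq [Fintype ι] [AddCommGroup G] {S : Finset ι}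
    (hS : S.Nonempty) (c : G) :
    Nat.card {v : ι → G // Function.support v ⊆ S ∧ ∑ i, v i = c} =
      Nat.card G ^ (S.card - 1) := by
  classical
  obtain ⟨a, ha⟩ := hS
  let e := (Equiv.subtypeSubtypeEquivSubtypeInter _ (fun v : ι → G => ∑ i, v i = c)).symm.trans
    ((supportedFunEquivPi S).subtypeEquiv (q := fun f => ∑ i, f i = c) fun v => by
      rw [sum_supportedFunEquivPi])
  rw [Nat.card_congr e, Nat.card_fun_sum_eq ⟨a, ha⟩, Nat.card_eq_finsetCard]

theorem Finset.sum_ite_mem_eq_of_notMem {M : Type*} [Fintype α] [DecidableEq α] [AddCommMonoid M]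
    {s : Finset α} {a : α} (ha : a ∉ s) (f g : α → M) :
    ∑ x, (if x ∈ s then f x else g x) =
      g a + ∑ x ∈ s, f x + ∑ x ∈ univ.filter (fun x => x ∉ s ∪ {a}), g x := by
  have hcompl : univ.filter (· ∉ s) = insert a (univ.filter (fun x => x ∉ s ∪ {a})) := by
    ext x
    by_cases hx : x = a <;> simp [hx, ha]
  rw [sum_ite, filter_mem_eq_inter, univ_inter, hcompl, sum_insert (by simp)]
  ac_rfl

section IndexCoding

variable {K N : ℕ} (M : Fin N → Finset (Fin K)) (R : Fin K → Finset (Fin K))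

def senders (m : Fin K) : Finset (Fin N) := univ.filter (fun n => m ∈ M n)

/-- Demand and coupled parity together say that `∑ₙ A n` agrees with the identity matrix outside
the side-information entries `k' ∈ 𝓡 k`. -/
def EntryFits (k k' : Fin K) (v : Fin N → ZMod 2) : Prop :=
  Function.support v ⊆ senders M k' ∧ (k' ∉ R k → ∑ n, v n = if k = k' then 1 else 0)

variable {M R}

theorem fits_iff_forall_entryFits (hR : ∀ k, k ∉ R k)
    (A : Fin N → Matrix (Fin K) (Fin K) (ZMod 2)) :
    Fits K N M R A ↔ ∀ k k', EntryFits M R k k' (fun n => A n k k') := by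
  have hsupport (v : Fin N → ZMod 2) (m : Fin K) :
      (∀ n, v n = 1 → m ∈ M n) ↔ Function.support v ⊆ senders M m := by
    simp only [Function.support_subset_iff, senders, coe_filter, mem_univ, true_and]
    exact forall_congr' fun n => imp_congr_left ⟨fun h => h ▸ one_ne_zero, Fin.eq_one_of_ne_zero _⟩
  constructor
  · rintro ⟨hsupp, hdemand, hcoupled⟩ k k'
    refine ⟨(hsupport _ _).1 (hsupp · k k'), fun hk' => ?_⟩
    split_ifs with h
    · exact h ▸ hdemand k
    · exact hcoupled k k' (Ne.symm h) hk'
  · intro h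
    refine ⟨fun n k k' => (hsupport _ _).2 (h k k').1 n, fun k => ?_, fun k k' hne hk' => ?_⟩
    · simpa using (h k k).2 (hR k)
    · simpa [Ne.symm hne] using (h k k').2 hk'

def fitsEquiv (hR : ∀ k, k ∉ R k) :
    {A // Fits K N M R A} ≃ ∀ k k', {v // EntryFits M R k k' v} :=
  let entries : (Fin N → Matrix (Fin K) (Fin K) (ZMod 2)) ≃ (Fin K → Fin K → Fin N → ZMod 2) :=
    { toFun A k k' n := A n k k'
      invFun F n k k' := F k k' n
      left_inv _ := rfl
      right_inv _ := rfl }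
  (entries.subtypeEquiv (fits_iff_forall_entryFits hR)).trans
    (Equiv.subtypePiEquivPi.trans (Equiv.piCongrRight fun _ => Equiv.subtypePiEquivPi))

theorem card_entryFits (k : Fin K) {k' : Fin K} (hk' : (senders M k').Nonempty) :
    Nat.card {v // EntryFits M R k k' v} =
      2 ^ (if k' ∈ R k then #(senders M k') else #(senders M k') - 1) := by
  split_ifs with h
  · simp only [EntryFits, h, not_true_eq_false, false_implies, and_true]
    rw [Nat.card_fun_support_subset, Nat.card_zmod]
  · simp only [EntryFits, h, not_false_eq_true, forall_const]
    rw [Nat.card_fun_support_subset_sum_eq hk', Nat.card_zmod]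

end IndexCoding

/-- Search-space size of Algorithm 1: the number of fitting tuples equals `2`
raised to `∑ k, ((d k − 1) + ∑_{k' ∈ 𝓡 k} d k' + ∑_{k' ∉ 𝓡 k ∪ {k}} (d k' − 1))`,
where `d m` is the replication degree of message `m`. -/
theorem search_space_size
    (K N : ℕ) (M : Fin N → Finset (Fin K)) (R : Fin K → Finset (Fin K))
    (hR : ∀ k, k ∉ R k)
    (d : Fin K → ℕ) (hd : ∀ m, d m = (univ.filter (fun n => m ∈ M n)).card)
    (hd1 : ∀ m, 1 ≤ d m) :
    Nat.card {A : Fin N → Matrix (Fin K) (Fin K) (ZMod 2) // Fits K N M R A} =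
      2 ^ (∑ k : Fin K, ((d k - 1) + (∑ k' ∈ R k, d k') +
        ∑ k' ∈ univ.filter (fun k' => k' ∉ R k ∪ {k}), (d k' - 1))) := by
  obtain rfl : d = fun m => #(senders M m) := funext hd
  have hsenders (m : Fin K) : (senders M m).Nonempty := card_pos.1 (hd1 m)
  rw [Nat.card_congr (fitsEquiv hR), Nat.card_pi]
  simp_rw [Nat.card_pi, card_entryFits _ (hsenders _), prod_pow_eq_pow_sum]
  congr 1
  exact sum_congr rfl fun k _ => sum_ite_mem_eq_of_notMem (hR k) _ _
end
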